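/- arXiv:1204.3336 — 2 statements merged into one kernel-verified Lean document; each statement's English description precedes it below -/
import Mathlib

section
/- Let (w_n)_{n∈ℤ} be a bounded sequence of positive reals with w_n → λ₁ as n → +∞ and w_n → λ₂ as n → −∞, where 0 < λ₁ < λ₂. Let W be the bilateral weighted shift W e_n = w_n e_{n+1} on ℓ²(ℤ). Then every λ ∈ ℂ with λ₁ < |λ| < λ₂ is an eigenvalue of W. -/
/-!
The eigenvalue equation `W x = μ x` says coordinatewise that `w n * x n = μ * x (n + 1)`; with
`x 0 = 1` this determines `x`. Then `|x (n + 1) / x n| = w n / |μ| → λ₁ / |μ| < 1` as `n → +∞` and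
`|x (n - 1) / x n| = |μ| / w (n - 1) → |μ| / λ₂ < 1` as `n → -∞`, so by the ratio test on both
halves `x ∈ ℓ¹ ⊆ ℓ²`. Expanding `x` in the basis and using continuity of `W` gives `W x = μ x`.
-/

open Filter Topology Finset

section WeightedShift

variable {𝕜 : Type*} [NormedField 𝕜] {p : ENNReal} [Fact (1 ≤ p)]

theorem weightedShift_apply_eq_smul (hp : p ≠ ⊤)
    (W : lp (fun _ : ℤ => 𝕜) p →L[𝕜] lp (fun _ : ℤ => 𝕜) p) (w : ℤ → 𝕜)
    (hW : ∀ n, W (lp.single p n 1) = w n • lp.single p (n + 1) 1)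
    {μ : 𝕜} {x : lp (fun _ : ℤ => 𝕜) p} (hx : ∀ n, w n * x n = μ * x (n + 1)) :
    W x = μ • x := by
  have hsum : HasSum (fun n : ℤ => lp.single p n (x n)) x := lp.hasSum_single hp x
  have hterm (n : ℤ) : W (lp.single p n (x n)) = μ • lp.single p (n + 1) (x (n + 1)) := by
    rw [← mul_one (x n), ← smul_eq_mul, lp.single_smul, map_smul, hW, smul_smul, mul_comm, hx,
      ← smul_smul, ← lp.single_smul, smul_eq_mul, mul_one]
  have hWsum := W.hasSum hsum
  simp only [hterm] at hWsum
  exact hWsum.unique (((Equiv.addRight (1 : ℤ)).hasSum_iff.mpr hsum).const_smul μ)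

end WeightedShift

section EigenCoeff

variable {K : Type*} [Field K]

def shiftEigenCoeff (w : ℤ → K) (μ : K) : ℤ → K
  | (n : ℕ) => ∏ k ∈ range n, w k / μ
  | Int.negSucc n => ∏ k ∈ range (n + 1), μ / w (-(k + 1))

theorem shiftEigenCoeff_ne_zero {w : ℤ → K} {μ : K} (hw : ∀ n, w n ≠ 0) (hμ : μ ≠ 0) (n : ℤ) :
    shiftEigenCoeff w μ n ≠ 0 := by
  cases n <;> simp [shiftEigenCoeff, prod_eq_zero_iff, hw, hμ]

theorem mul_shiftEigenCoeff {w : ℤ → K} {μ : K} (hw : ∀ n, w n ≠ 0) (hμ : μ ≠ 0) (n : ℤ) :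
    w n * shiftEigenCoeff w μ n = μ * shiftEigenCoeff w μ (n + 1) := by
  rcases n with (n | _ | n)
  · have hsucc : (n : ℤ) + 1 = (n + 1 : ℕ) := rfl
    rw [Int.ofNat_eq_natCast, hsucc]
    simp only [shiftEigenCoeff, prod_range_succ]
    field_simp
  · simpa [shiftEigenCoeff, Int.negSucc_eq] using mul_div_cancel₀ μ (hw (-1))
  · have hsucc : Int.negSucc (n + 1) + 1 = Int.negSucc n := rfl
    rw [hsucc]
    simp only [shiftEigenCoeff, prod_range_succ (n := n + 1)]
    rw [Int.negSucc_eq, mul_left_comm, mul_div_cancel₀ _ (hw _), mul_comm]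

end EigenCoeff

theorem summable_norm_of_ratio_tendsto_lt_one {E : Type*} [NormedAddCommGroup E] {x : ℤ → E}
    (hx : ∀ n, x n ≠ 0) {a b : ℝ} (ha : a < 1) (hb : b < 1)
    (htop : Tendsto (fun n : ℕ => ‖x (n + 1)‖ / ‖x n‖) atTop (𝓝 a))
    (hbot : Tendsto (fun n : ℕ => ‖x (-(n + 1))‖ / ‖x (-n)‖) atTop (𝓝 b)) :
    Summable (fun n => ‖x n‖) := by
  refine .of_nat_of_neg (summable_of_ratio_test_tendsto_lt_one ha ?_ ?_)
    (summable_of_ratio_test_tendsto_lt_one hb ?_ ?_)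
  · exact .of_forall fun n => norm_ne_zero_iff.mpr (hx n)
  · simpa using htop
  · exact .of_forall fun n => norm_ne_zero_iff.mpr (hx _)
  · simpa using hbot

theorem summable_norm_shiftEigenCoeff {K : Type*} [NormedField K] {w : ℤ → K} {μ : K}
    (hw : ∀ n, w n ≠ 0) (hμ : μ ≠ 0) {a b : ℝ}
    (htop : Tendsto (fun n : ℕ => ‖w n‖) atTop (𝓝 a))
    (hbot : Tendsto (fun n : ℕ => ‖w (-n)‖) atTop (𝓝 b)) (ha : a < ‖μ‖) (hb : ‖μ‖ < b) :
    Summable (fun n => ‖shiftEigenCoeff w μ n‖) := by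
  set c := shiftEigenCoeff w μ
  have hc := shiftEigenCoeff_ne_zero hw hμ
  have hμpos : 0 < ‖μ‖ := norm_pos_iff.mpr hμ
  have hratio (n : ℤ) : ‖c (n + 1)‖ / ‖c n‖ = ‖w n‖ / ‖μ‖ := by
    rw [div_eq_div_iff (norm_ne_zero_iff.mpr (hc n)) hμpos.ne', ← norm_mul, ← norm_mul,
      mul_comm, ← mul_shiftEigenCoeff hw hμ, mul_comm]
  refine summable_norm_of_ratio_tendsto_lt_one hc ((div_lt_one hμpos).mpr ha)
    ((div_lt_one (hμpos.trans hb)).mpr hb) ?_ ?_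
  · simpa only [hratio] using htop.div_const ‖μ‖
  · have hbot' : Tendsto (fun n : ℕ => ‖w (-(n + 1))‖) atTop (𝓝 b) := by
      simpa only [Function.comp_def, Nat.cast_add, Nat.cast_one]
        using hbot.comp (tendsto_add_atTop_nat 1)
    have hlim : Tendsto (fun n : ℕ => ‖μ‖ / ‖w (-(n + 1))‖) atTop (𝓝 (‖μ‖ / b)) :=
      tendsto_const_nhds.div hbot' (hμpos.trans hb).ne'
    refine hlim.congr fun n => ?_
    have hshift : -((n : ℤ) + 1) + 1 = -n := by ring
    rw [← inv_div, ← hratio, hshift, inv_div]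

theorem stmt10_general (l1 l2 : ℝ) (hl1 : 0 < l1)
    (w : ℤ → ℝ) (hwpos : ∀ n : ℤ, 0 < w n)
    (htop : Tendsto (fun n : ℕ => w (n : ℤ)) atTop (nhds l1))
    (hbot : Tendsto (fun n : ℕ => w (-(n : ℤ))) atTop (nhds l2))
    (W : lp (fun _ : ℤ => ℂ) 2 →L[ℂ] lp (fun _ : ℤ => ℂ) 2)
    (hW : ∀ n : ℤ, W (lp.single 2 n (1 : ℂ)) = (w n : ℂ) • lp.single 2 (n + 1) (1 : ℂ))
    (μ : ℂ) (hμ1 : l1 < ‖μ‖) (hμ2 : ‖μ‖ < l2) :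
    ∃ x, x ≠ 0 ∧ W x = μ • x := by
  have hμ : μ ≠ 0 := norm_pos_iff.mp (hl1.trans hμ1)
  have hw (n : ℤ) : (w n : ℂ) ≠ 0 := Complex.ofReal_ne_zero.mpr (hwpos n).ne'
  have hnorm (n : ℤ) : ‖(w n : ℂ)‖ = w n := by simp [(hwpos n).le]
  have hsum := summable_norm_shiftEigenCoeff hw hμ (by simpa only [hnorm] using htop)
    (by simpa only [hnorm] using hbot) hμ1 hμ2
  have hmem : Memℓp (shiftEigenCoeff (fun n => (w n : ℂ)) μ) 2 :=
    (memℓp_gen (p := 1) (by simpa using hsum)).of_exponent_ge one_le_two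
  refine ⟨⟨_, hmem⟩, fun h => shiftEigenCoeff_ne_zero hw hμ 0 ?_,
    weightedShift_apply_eq_smul ENNReal.ofNat_ne_top W _ hW (mul_shiftEigenCoeff hw hμ)⟩
  simpa using congrArg (fun x : lp (fun _ : ℤ => ℂ) 2 => x 0) h

/-- If the weights `w_n > 0` are bounded with `w_n → λ₁` as `n → +∞` and `w_n → λ₂` as
`n → −∞` (`0 < λ₁ < λ₂`), then every `λ` with `λ₁ < |λ| < λ₂` is an eigenvalue of the
bilateral weighted shift `W e_n = w_n e_{n+1}` on `ℓ²(ℤ)`. -/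
theorem stmt10 (l1 l2 : ℝ) (hl1 : 0 < l1) (hl12 : l1 < l2)
    (w : ℤ → ℝ) (hwpos : ∀ n : ℤ, 0 < w n) (hbdd : ∃ C : ℝ, ∀ n : ℤ, w n ≤ C)
    (htop : Tendsto (fun n : ℕ => w (n : ℤ)) atTop (nhds l1))
    (hbot : Tendsto (fun n : ℕ => w (-(n : ℤ))) atTop (nhds l2))
    (W : lp (fun _ : ℤ => ℂ) 2 →L[ℂ] lp (fun _ : ℤ => ℂ) 2)
    (hW : ∀ n : ℤ, W (lp.single 2 n (1 : ℂ)) = (w n : ℂ) • lp.single 2 (n + 1) (1 : ℂ))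
    (μ : ℂ) (hμ1 : l1 < ‖μ‖) (hμ2 : ‖μ‖ < l2) :
    ∃ x, x ≠ 0 ∧ W x = μ • x :=
  stmt10_general l1 l2 hl1 w hwpos htop hbot W hW μ hμ1 hμ2
end

section
/- Let (w_n)_{n∈ℤ} be a bounded sequence of positive reals with w_n ≥ λ₁ for all n ≥ 0 and w_n ≤ λ₂ for all n ≤ −1, where 0 < λ₁ < λ₂, and w_n → λ₁ (n → +∞), w_n → λ₂ (n → −∞). Then the point spectrum of the bilateral weighted shift W e_n = w_n e_{n+1} on ℓ²(ℤ) is exactly the open annulus {λ : λ₁ < |λ| < λ₂}. -/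
/-!
An eigenvector `x` of `W` for `μ` satisfies `μ x (n + 1) = w n x n`. Hence `μ ≠ 0` and `x` is
`x 0` times the sequence `e` with `e 0 = 1`, `e (n + 1) = (w n / μ) e n`, so `μ` is an eigenvalue
iff `e ∈ ℓ²`. The ratios `‖e (n + 1)‖ / ‖e n‖ = w n / ‖μ‖` tend to `λ₁ / ‖μ‖` as `n → +∞`, and
`‖e (-n - 1)‖ / ‖e (-n)‖` tend to `‖μ‖ / λ₂`; if both limits are `< 1`, the ratio test puts `e` in
`ℓ²`. If instead `‖μ‖ ≤ λ₁` (resp. `λ₂ ≤ ‖μ‖`), the one-sided bounds on the weights make the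
ratios `≥ 1` on the corresponding half-line, so `‖e n‖ ≥ 1` there and `e ∉ ℓ²`.
-/

open Filter Topology

section IntPartialProd

variable {K : Type*} [Field K] (c : ℤ → K)

/-- `∏_{0 ≤ k < n} c k` for `n ≥ 0` and `∏_{n ≤ k < 0} (c k)⁻¹` for `n < 0`. -/
def intPartialProd : ℤ → K
  | (m : ℕ) => ∏ k ∈ Finset.range m, c k
  | Int.negSucc m => ∏ k ∈ Finset.range (m + 1), (c (-(k + 1)))⁻¹

@[simp]
theorem intPartialProd_zero : intPartialProd c 0 = 1 := rfl

variable {c}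

theorem intPartialProd_succ (hc : ∀ n, c n ≠ 0) (n : ℤ) :
    intPartialProd c (n + 1) = c n * intPartialProd c n := by
  rcases n with m | _ | m
  · rw [Int.ofNat_eq_natCast, ← Nat.cast_succ]
    simp only [intPartialProd, Finset.prod_range_succ, mul_comm]
  · simp [intPartialProd, hc]
  · rw [show Int.negSucc (m + 1) + 1 = Int.negSucc m by omega]
    simp only [intPartialProd, Finset.prod_range_succ (n := m + 1)]
    rw [mul_left_comm, Int.negSucc_eq, Nat.cast_succ, mul_inv_cancel₀ (hc _), mul_one]

theorem eq_mul_intPartialProd (hc : ∀ n, c n ≠ 0) {f : ℤ → K}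
    (hf : ∀ n, f (n + 1) = c n * f n) (n : ℤ) : f n = f 0 * intPartialProd c n := by
  induction n using Int.induction_on with
  | zero => simp
  | succ n ih => rw [hf, ih, intPartialProd_succ hc]; ring
  | pred n ih =>
    apply mul_left_cancel₀ (hc (-n - 1))
    rw [← hf, ← mul_left_comm, ← intPartialProd_succ hc, sub_add_cancel, ih]

end IntPartialProd

theorem Memℓp.tendsto_norm_cofinite_zero {α : Type*} {E : α → Type*}
    [∀ i, NormedAddCommGroup (E i)] {p : ENNReal} {f : ∀ i, E i} (hf : Memℓp f p)
    (hp : 0 < p.toReal) : Tendsto (fun i => ‖f i‖) cofinite (𝓝 0) := by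
  have h := ((hf.summable hp).tendsto_cofinite_zero).rpow_const (p := p.toReal⁻¹)
    (Or.inr (inv_nonneg.2 hp.le))
  rw [Real.zero_rpow (inv_ne_zero hp.ne')] at h
  refine h.congr fun i => ?_
  rw [← Real.rpow_mul (norm_nonneg _), mul_inv_cancel₀ hp.ne', Real.rpow_one]

theorem summable_norm_sq_of_tendsto_ratio {E : Type*} [SeminormedAddCommGroup E]
    {g : ℕ → E} {ρ : ℕ → ℝ} {a : ℝ} (ha : a < 1) (hρ : Tendsto ρ atTop (𝓝 a))
    (hg : ∀ k, ‖g (k + 1)‖ = ρ k * ‖g k‖) : Summable fun k => ‖g k‖ ^ 2 := by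
  obtain ⟨r, har, hr1⟩ := exists_between (max_lt ha one_pos)
  have hr0 : 0 ≤ r := (le_max_right _ _).trans har.le
  apply summable_of_ratio_norm_eventually_le (r := r ^ 2) (pow_lt_one₀ hr0 hr1 two_ne_zero)
  filter_upwards [hρ.eventually_lt_const ((le_max_left _ _).trans_lt har)] with k hk
  simp only [norm_pow, norm_norm, ← mul_pow]
  gcongr
  rw [hg]
  exact mul_le_mul_of_nonneg_right hk.le (norm_nonneg _)

section WeightedShift

variable {w : ℤ → ℝ} {W : lp (fun _ : ℤ => ℂ) 2 →L[ℂ] lp (fun _ : ℤ => ℂ) 2}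

theorem weightedShift_apply_succ
    (hW : ∀ n : ℤ, W (lp.single 2 n (1 : ℂ)) = (w n : ℂ) • lp.single 2 (n + 1) (1 : ℂ))
    (x : lp (fun _ : ℤ => ℂ) 2) (n : ℤ) : W x (n + 1) = w n * x n := by
  have hsum := (lp.hasSum_single ENNReal.ofNat_ne_top x).mapL ((lp.evalCLM ℂ _ 2 (n + 1)).comp W)
  have hterm : ∀ i, (lp.evalCLM ℂ _ 2 (n + 1)).comp W (lp.single 2 i (x i))
      = if i = n then w n * x n else 0 := by
    intro i
    rw [← mul_one (x i), ← smul_eq_mul, lp.single_smul]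
    rcases eq_or_ne i n with rfl | hin
    · simp [lp.evalCLM, hW, mul_comm]
    · simp [lp.evalCLM, hW, hin]
  simp only [hterm] at hsum
  exact hsum.unique (hasSum_ite_eq n _)

theorem weightedShift_eq_smul_iff
    (hW : ∀ n : ℤ, W (lp.single 2 n (1 : ℂ)) = (w n : ℂ) • lp.single 2 (n + 1) (1 : ℂ))
    (x : lp (fun _ : ℤ => ℂ) 2) (μ : ℂ) :
    W x = μ • x ↔ ∀ n, μ * x (n + 1) = w n * x n := by
  simp only [lp.ext_iff, funext_iff, lp.coeFn_smul, Pi.smul_apply, smul_eq_mul]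
  refine ⟨fun h n => by rw [← h, weightedShift_apply_succ hW], fun h m => ?_⟩
  obtain ⟨n, rfl⟩ : ∃ n, m = n + 1 := ⟨m - 1, by ring⟩
  rw [weightedShift_apply_succ hW, h]

end WeightedShift

noncomputable def shiftEigenseq (w : ℤ → ℝ) (μ : ℂ) : ℤ → ℂ :=
  intPartialProd fun n => (w n : ℂ) / μ

section ShiftEigenseq

variable {w : ℤ → ℝ} {μ : ℂ}

theorem shiftEigenseq_succ (hw : ∀ n, w n ≠ 0) (hμ : μ ≠ 0) (n : ℤ) :
    shiftEigenseq w μ (n + 1) = w n / μ * shiftEigenseq w μ n :=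
  intPartialProd_succ (fun n => div_ne_zero (by exact_mod_cast hw n) hμ) n

theorem norm_shiftEigenseq_succ (hw : ∀ n, 0 < w n) (hμ : μ ≠ 0) (n : ℤ) :
    ‖shiftEigenseq w μ (n + 1)‖ = w n / ‖μ‖ * ‖shiftEigenseq w μ n‖ := by
  rw [shiftEigenseq_succ (fun n => (hw n).ne') hμ, norm_mul, norm_div, Complex.norm_real,
    Real.norm_of_nonneg (hw n).le]

theorem norm_shiftEigenseq_neg_succ (hw : ∀ n, 0 < w n) (hμ : μ ≠ 0) (k : ℕ) :
    ‖shiftEigenseq w μ (-(k + 1 : ℕ))‖ = ‖μ‖ / w (-(k + 1 : ℕ)) * ‖shiftEigenseq w μ (-k)‖ := by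
  have h := norm_shiftEigenseq_succ hw hμ (-(k + 1 : ℕ))
  rw [show -((k + 1 : ℕ) : ℤ) + 1 = -k by push_cast; ring] at h
  have hwk := hw (-(k + 1 : ℕ))
  have hμ' := norm_pos_iff.2 hμ
  rw [h]
  field_simp

theorem one_le_norm_shiftEigenseq_natCast (hw : ∀ n, 0 < w n) (hμ : μ ≠ 0)
    (h : ∀ n : ℤ, 0 ≤ n → ‖μ‖ ≤ w n) (k : ℕ) : 1 ≤ ‖shiftEigenseq w μ k‖ := by
  induction k with
  | zero => simp [shiftEigenseq]
  | succ k ih =>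
    rw [Nat.cast_succ, norm_shiftEigenseq_succ hw hμ]
    exact one_le_mul_of_one_le_of_one_le
      ((one_le_div (norm_pos_iff.2 hμ)).2 (h k k.cast_nonneg)) ih

theorem one_le_norm_shiftEigenseq_neg_natCast (hw : ∀ n, 0 < w n) (hμ : μ ≠ 0)
    (h : ∀ n : ℤ, n < 0 → w n ≤ ‖μ‖) (k : ℕ) : 1 ≤ ‖shiftEigenseq w μ (-k)‖ := by
  induction k with
  | zero => simp [shiftEigenseq]
  | succ k ih =>
    rw [norm_shiftEigenseq_neg_succ hw hμ]
    exact one_le_mul_of_one_le_of_one_le ((one_le_div (hw _)).2 (h _ (by omega))) ih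

theorem summable_norm_sq_shiftEigenseq_natCast {l : ℝ} (hw : ∀ n, 0 < w n) (hμ : μ ≠ 0)
    (hl : Tendsto (fun n : ℕ => w n) atTop (𝓝 l)) (hlμ : l < ‖μ‖) :
    Summable fun k : ℕ => ‖shiftEigenseq w μ k‖ ^ 2 :=
  summable_norm_sq_of_tendsto_ratio ((div_lt_one (norm_pos_iff.2 hμ)).2 hlμ) (hl.div_const _)
    fun k => by rw [Nat.cast_succ, norm_shiftEigenseq_succ hw hμ]

theorem summable_norm_sq_shiftEigenseq_neg_natCast {l : ℝ} (hw : ∀ n, 0 < w n) (hμ : μ ≠ 0)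
    (hl : Tendsto (fun n : ℕ => w (-n)) atTop (𝓝 l)) (hlμ : ‖μ‖ < l) :
    Summable fun k : ℕ => ‖shiftEigenseq w μ (-k)‖ ^ 2 := by
  have hl0 : 0 < l := (norm_nonneg μ).trans_lt hlμ
  exact summable_norm_sq_of_tendsto_ratio (ρ := fun k => ‖μ‖ / w (-(k + 1 : ℕ)))
    ((div_lt_one hl0).2 hlμ)
    (tendsto_const_nhds.div (hl.comp (tendsto_add_atTop_nat 1)) hl0.ne')
    (norm_shiftEigenseq_neg_succ hw hμ)

theorem memℓp_shiftEigenseq_iff {l1 l2 : ℝ} (hw : ∀ n, 0 < w n)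
    (hμ : μ ≠ 0) (hge : ∀ n : ℤ, 0 ≤ n → l1 ≤ w n) (hle : ∀ n : ℤ, n < 0 → w n ≤ l2)
    (htop : Tendsto (fun n : ℕ => w n) atTop (𝓝 l1))
    (hbot : Tendsto (fun n : ℕ => w (-n)) atTop (𝓝 l2)) :
    Memℓp (shiftEigenseq w μ) 2 ↔ l1 < ‖μ‖ ∧ ‖μ‖ < l2 := by
  constructor
  · intro he
    have hzero := he.tendsto_norm_cofinite_zero (by norm_num)
    have hnat : Tendsto (fun k : ℕ => (k : ℤ)) atTop cofinite :=
      Nat.cofinite_eq_atTop ▸ Nat.cast_injective.tendsto_cofinite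
    have hneg : Tendsto (fun k : ℕ => -(k : ℤ)) atTop cofinite :=
      Nat.cofinite_eq_atTop ▸ (neg_injective.comp Nat.cast_injective).tendsto_cofinite
    constructor
    · by_contra! h
      have := ge_of_tendsto' (hzero.comp hnat)
        (one_le_norm_shiftEigenseq_natCast hw hμ fun n hn => h.trans (hge n hn))
      norm_num at this
    · by_contra! h
      have := ge_of_tendsto' (hzero.comp hneg)
        (one_le_norm_shiftEigenseq_neg_natCast hw hμ fun n hn => (hle n hn).trans h)
      norm_num at this
  · rintro ⟨h1, h2⟩
    apply memℓp_gen
    simp only [ENNReal.toReal_ofNat, Real.rpow_two]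
    exact .of_nat_of_neg (summable_norm_sq_shiftEigenseq_natCast hw hμ htop h1)
      (summable_norm_sq_shiftEigenseq_neg_natCast hw hμ hbot h2)

end ShiftEigenseq

theorem exists_eigenvector_weightedShift_iff {w : ℤ → ℝ}
    {W : lp (fun _ : ℤ => ℂ) 2 →L[ℂ] lp (fun _ : ℤ => ℂ) 2} (hw : ∀ n, w n ≠ 0)
    (hW : ∀ n : ℤ, W (lp.single 2 n (1 : ℂ)) = (w n : ℂ) • lp.single 2 (n + 1) (1 : ℂ))
    (μ : ℂ) : (∃ x, x ≠ 0 ∧ W x = μ • x) ↔ μ ≠ 0 ∧ Memℓp (shiftEigenseq w μ) 2 := by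
  simp only [weightedShift_eq_smul_iff hW]
  constructor
  · rintro ⟨x, hx0, hx⟩
    have hμ : μ ≠ 0 := by
      rintro rfl
      refine hx0 (lp.ext (funext fun n => ?_))
      simpa [hw n] using (hx n).symm
    have hxe : ⇑x = x 0 • shiftEigenseq w μ := funext <| eq_mul_intPartialProd
      (fun n => div_ne_zero (by exact_mod_cast hw n) hμ)
      fun n => by rw [← mul_right_inj' hμ, hx]; field_simp
    have hx00 : x 0 ≠ 0 := fun h => hx0 (lp.ext (by rw [hxe, h, zero_smul]; rfl))
    have he : shiftEigenseq w μ = (x 0)⁻¹ • ⇑x := funext fun n => by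
      rw [Pi.smul_apply, congr_fun hxe n, Pi.smul_apply, smul_smul, inv_mul_cancel₀ hx00, one_smul]
    exact ⟨hμ, he ▸ (lp.memℓp x).const_smul _⟩
  · rintro ⟨hμ, he⟩
    refine ⟨⟨_, he⟩, fun h => ?_, fun n => ?_⟩
    · simpa [shiftEigenseq] using congr_fun (congr_arg (⇑) h) 0
    · change μ * shiftEigenseq w μ (n + 1) = w n * shiftEigenseq w μ n
      rw [shiftEigenseq_succ hw hμ]
      field_simp

theorem stmt11_general (l1 l2 : ℝ) (hl1 : 0 < l1)
    (w : ℤ → ℝ) (hwpos : ∀ n : ℤ, 0 < w n)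
    (hge : ∀ n : ℤ, 0 ≤ n → l1 ≤ w n) (hle : ∀ n : ℤ, n < 0 → w n ≤ l2)
    (htop : Tendsto (fun n : ℕ => w (n : ℤ)) atTop (nhds l1))
    (hbot : Tendsto (fun n : ℕ => w (-(n : ℤ))) atTop (nhds l2))
    (W : lp (fun _ : ℤ => ℂ) 2 →L[ℂ] lp (fun _ : ℤ => ℂ) 2)
    (hW : ∀ n : ℤ, W (lp.single 2 n (1 : ℂ)) = (w n : ℂ) • lp.single 2 (n + 1) (1 : ℂ)) :
    {μ : ℂ | ∃ x, x ≠ 0 ∧ W x = μ • x} =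
      {μ : ℂ | l1 < ‖μ‖ ∧ ‖μ‖ < l2} := by
  ext μ
  simp only [Set.mem_ofPred_eq, exists_eigenvector_weightedShift_iff (fun n => (hwpos n).ne') hW]
  constructor
  · rintro ⟨hμ, he⟩
    exact (memℓp_shiftEigenseq_iff hwpos hμ hge hle htop hbot).1 he
  · intro hann
    have hμ : μ ≠ 0 := norm_pos_iff.1 (hl1.trans hann.1)
    exact ⟨hμ, (memℓp_shiftEigenseq_iff hwpos hμ hge hle htop hbot).2 hann⟩

/-- If the weights satisfy `w_n ≥ λ₁` for `n ≥ 0`, `w_n ≤ λ₂` for `n ≤ −1`, with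
`w_n → λ₁` as `n → +∞` and `w_n → λ₂` as `n → −∞` (`0 < λ₁ < λ₂`), then the point
spectrum of the bilateral weighted shift `W e_n = w_n e_{n+1}` on `ℓ²(ℤ)` is exactly
the open annulus `{λ : λ₁ < |λ| < λ₂}`. -/
theorem stmt11 (l1 l2 : ℝ) (hl1 : 0 < l1) (hl12 : l1 < l2)
    (w : ℤ → ℝ) (hwpos : ∀ n : ℤ, 0 < w n) (hbdd : ∃ C : ℝ, ∀ n : ℤ, w n ≤ C)
    (hge : ∀ n : ℤ, 0 ≤ n → l1 ≤ w n) (hle : ∀ n : ℤ, n < 0 → w n ≤ l2)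
    (htop : Tendsto (fun n : ℕ => w (n : ℤ)) atTop (nhds l1))
    (hbot : Tendsto (fun n : ℕ => w (-(n : ℤ))) atTop (nhds l2))
    (W : lp (fun _ : ℤ => ℂ) 2 →L[ℂ] lp (fun _ : ℤ => ℂ) 2)
    (hW : ∀ n : ℤ, W (lp.single 2 n (1 : ℂ)) = (w n : ℂ) • lp.single 2 (n + 1) (1 : ℂ)) :
    {μ : ℂ | ∃ x, x ≠ 0 ∧ W x = μ • x} =
      {μ : ℂ | l1 < ‖μ‖ ∧ ‖μ‖ < l2} :=
  stmt11_general l1 l2 hl1 w hwpos hge hle htop hbot W hW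
end
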